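/- The bi-periodic Jacobsthal and bi-periodic Jacobsthal Lucas sequences satisfy C_n = 2·j_{n−1} + j_{n+1} and (ab + 8)·j_n = 2·C_{n−1} + C_{n+1} for all n ≥ 1. -/

import Mathlib

/-!
Both sequences solve a second-order linear recurrence `x (n + 2) = p n * x (n + 1) + 2 * x n`
whose coefficient `p` alternates between `a` and `b`. Since `p` has period two, shifting a
solution by two (or shifting `C` by one, which swaps the roles of `a` and `b`) gives again a
solution, so both sides of each identity solve the same recurrence; they agree at `0` and `1`,
hence everywhere.
-/

noncomputable def jj (a b : ℝ) : ℕ → ℝ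
  | 0 => 0
  | 1 => 1
  | n + 2 => (if Even (n + 2) then a else b) * jj a b (n + 1) + 2 * jj a b n

noncomputable def CC (a b : ℝ) : ℕ → ℝ
  | 0 => 2
  | 1 => a
  | n + 2 => (if Even (n + 2) then b else a) * CC a b (n + 1) + 2 * CC a b n

def SolvesRecurrence {R : Type*} [Semiring R] (p q x : ℕ → R) : Prop :=
  ∀ n, x (n + 2) = p n * x (n + 1) + q n * x n

namespace SolvesRecurrence

variable {R : Type*} {p q x y : ℕ → R}

theorem add [Semiring R] (hx : SolvesRecurrence p q x) (hy : SolvesRecurrence p q y) :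
    SolvesRecurrence p q (x + y) := fun n => by
  simp only [Pi.add_apply, hx n, hy n, mul_add]
  exact add_add_add_comm _ _ _ _

theorem const_mul [CommSemiring R] (c : R) (hx : SolvesRecurrence p q x) :
    SolvesRecurrence p q (fun n => c * x n) := fun n => by
  dsimp only
  rw [hx n]
  ring

theorem comp_add [Semiring R] (hx : SolvesRecurrence p q x) (k : ℕ) :
    SolvesRecurrence (fun n => p (n + k)) (fun n => q (n + k)) (fun n => x (n + k)) := fun n => by
  simpa only [Nat.add_right_comm n 2 k, Nat.add_right_comm n 1 k] using hx (n + k)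

theorem eq_of_eq_of_eq [Semiring R] (hx : SolvesRecurrence p q x) (hy : SolvesRecurrence p q y)
    (h₀ : x 0 = y 0) (h₁ : x 1 = y 1) : x = y := by
  have key : ∀ n, x n = y n ∧ x (n + 1) = y (n + 1) := by
    intro n
    induction n with
    | zero => exact ⟨h₀, h₁⟩
    | succ n ih => exact ⟨ih.2, by rw [hx n, hy n, ih.1, ih.2]⟩
  exact funext fun n => (key n).1

end SolvesRecurrence

def alternating {α : Type*} (a b : α) (n : ℕ) : α := if Even n then a else b

theorem alternating_add_two {α : Type*} (a b : α) (n : ℕ) : alternating a b (n + 2) = alternating a b n := by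
  simp [alternating, Nat.even_add]

theorem alternating_succ {α : Type*} (a b : α) (n : ℕ) : alternating b a (n + 1) = alternating a b n := by
  by_cases h : Even n <;> simp [alternating, Nat.even_add_one, h]

theorem solvesRecurrence_jj (a b : ℝ) :
    SolvesRecurrence (alternating a b) (fun _ => 2) (jj a b) := fun n => by
  rw [jj, ← alternating, alternating_add_two]

theorem solvesRecurrence_CC (a b : ℝ) :
    SolvesRecurrence (alternating b a) (fun _ => 2) (CC a b) := fun n => by
  rw [CC, ← alternating, alternating_add_two]

theorem CC_succ (a b : ℝ) (n : ℕ) : CC a b (n + 1) = 2 * jj a b n + jj a b (n + 2) := by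
  have hC : SolvesRecurrence (alternating a b) (fun _ => 2) (fun n => CC a b (n + 1)) := by
    simpa only [alternating_succ] using (solvesRecurrence_CC a b).comp_add 1
  have hj : SolvesRecurrence (alternating a b) (fun _ => 2)
      (fun n => 2 * jj a b n + jj a b (n + 2)) := by
    refine ((solvesRecurrence_jj a b).const_mul 2).add ?_
    simpa only [alternating_add_two] using (solvesRecurrence_jj a b).comp_add 2
  refine congrFun (hC.eq_of_eq_of_eq hj ?_ ?_) n
  · norm_num [CC, jj, alternating]
  · norm_num [CC, jj, alternating]
    ring

theorem mul_jj_succ (a b : ℝ) (n : ℕ) :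
    (a * b + 8) * jj a b (n + 1) = 2 * CC a b n + CC a b (n + 2) := by
  have hj : SolvesRecurrence (alternating b a) (fun _ => 2)
      (fun n => (a * b + 8) * jj a b (n + 1)) := by
    simpa only [alternating_succ] using
      ((solvesRecurrence_jj a b).comp_add 1).const_mul (a * b + 8)
  have hC : SolvesRecurrence (alternating b a) (fun _ => 2)
      (fun n => 2 * CC a b n + CC a b (n + 2)) := by
    refine ((solvesRecurrence_CC a b).const_mul 2).add ?_
    simpa only [alternating_add_two] using (solvesRecurrence_CC a b).comp_add 2
  refine congrFun (hj.eq_of_eq_of_eq hC ?_ ?_) n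
  · norm_num [CC, jj, alternating]
    ring
  · norm_num [CC, jj, alternating]
    ring

theorem stmt14 (a b : ℝ) (n : ℕ) (hn : 1 ≤ n) :
    CC a b n = 2 * jj a b (n - 1) + jj a b (n + 1) ∧
    (a * b + 8) * jj a b n = 2 * CC a b (n - 1) + CC a b (n + 1) := by
  obtain ⟨m, rfl⟩ := Nat.exists_eq_add_of_le' hn
  exact ⟨CC_succ a b m, mul_jj_succ a b m⟩
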